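/- arXiv:2605.15970 — 10 statements merged into one kernel-verified Lean document; each statement's English description precedes it below -/
import Mathlib

section
/- If A is an n×n copositive matrix all of whose off-diagonal entries are nonpositive, then A is positive semidefinite. -/
/-!
Replacing `x` by `|x|` keeps the diagonal terms `A i i * x i ^ 2` and can only lower the
off-diagonal terms `A i j * x i * x j`, since `A i j ≤ 0` and `x i * x j ≤ |x i| * |x j|`.
So every value of the quadratic form dominates one at a nonnegative vector, which is
nonnegative by copositivity.
-/

open Matrix

def Copositive {ι : Type*} [Fintype ι] (A : Matrix ι ι ℝ) : Prop :=
  ∀ x : ι → ℝ, (∀ i, 0 ≤ x i) → 0 ≤ x ⬝ᵥ A.mulVec x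

def SPN {ι : Type*} [Fintype ι] (A : Matrix ι ι ℝ) : Prop :=
  ∃ P N : Matrix ι ι ℝ, P.PosSemidef ∧ (∀ i j, 0 ≤ N i j) ∧ A = P + N

def Mn {n : ℕ} (A : Matrix (Fin n) (Fin n) ℝ) : Prop :=
  ∀ i j k l : Fin n, i ≤ k → j ≤ l → i ≠ j → k ≠ l → A i j ≤ A k l

theorem Matrix.abs_dotProduct_mulVec_abs_le {ι : Type*} [Fintype ι] {A : Matrix ι ι ℝ}
    (hoff : ∀ i j, i ≠ j → A i j ≤ 0) (x : ι → ℝ) :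
    |x| ⬝ᵥ A *ᵥ |x| ≤ x ⬝ᵥ A *ᵥ x := by
  simp only [dotProduct, mulVec, Finset.mul_sum, Pi.abs_apply]
  refine Finset.sum_le_sum fun i _ => Finset.sum_le_sum fun j _ => ?_
  rcases eq_or_ne i j with rfl | hij
  · rw [mul_left_comm, abs_mul_abs_self, mul_left_comm]
  · have hprod : x i * x j ≤ |x i| * |x j| := abs_mul (x i) (x j) ▸ le_abs_self _
    calc |x i| * (A i j * |x j|) = A i j * (|x i| * |x j|) := by ring
      _ ≤ A i j * (x i * x j) := mul_le_mul_of_nonpos_left hprod (hoff i j hij)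
      _ = x i * (A i j * x j) := by ring

theorem stmt_1 {n : ℕ} (A : Matrix (Fin n) (Fin n) ℝ) (hA : A.IsSymm)
    (hcop : Copositive A) (hoff : ∀ i j : Fin n, i ≠ j → A i j ≤ 0) :
    A.PosSemidef := by
  refine posSemidef_iff_dotProduct_mulVec.mpr ⟨isHermitian_iff_isSymm.mpr hA, fun x => ?_⟩
  rw [star_trivial]
  exact (hcop |x| fun i => abs_nonneg (x i)).trans (abs_dotProduct_mulVec_abs_le hoff x)
end

section
/- Let A be an n×n positive semidefinite matrix with all off-diagonal entries nonpositive. Then there is a permutation matrix P such that P^T A P is block diagonal with blocks A₁ and A₂, where A₁ is singular and A₂ is positive definite (allowing either block to be empty, i.e., A₁ = A or A₂ = A). -/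
open Matrix

/-!
For a positive semidefinite Z-matrix `A`, the entrywise absolute value of a kernel vector is again
a kernel vector, since `|x|ᵀ A |x| ≤ xᵀ A x` when the off-diagonal entries are nonpositive. Summing
such vectors gives a nonnegative kernel vector `z` whose support `S` contains the support of every
kernel vector. Reading `A z = 0` at a row `i ∉ S` gives a sum of nonpositive terms `A i j * z j`, so
`A` has no entries between `S` and its complement. Hence `z` restricted to `S` lies in the kernel of
the `S`-block, which is therefore singular, while a vector annihilated by the quadratic form of the
complementary block extends by zero to a kernel vector of `A` supported off `S`, hence vanishes.
-/

open Function Finset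

namespace Matrix

section Extend

variable {ι κ R : Type*} [Fintype ι] [Fintype κ] [CommSemiring R]
  {A : Matrix ι ι R} {e : κ → ι}

theorem mulVec_extend_apply (he : Injective e) (y : κ → R) (a : κ) :
    (A *ᵥ extend e y 0) (e a) = (A.submatrix e e *ᵥ y) a := by
  simp only [mulVec, dotProduct, submatrix_apply]
  refine (Fintype.sum_of_injective e he _ _ (fun l hl => ?_) fun b => ?_).symm
  · rw [extend_apply' _ _ _ hl, Pi.zero_apply, mul_zero]
  · rw [he.extend_apply]

theorem extend_dotProduct_mulVec_extend (he : Injective e) (y : κ → R) :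
    extend e y 0 ⬝ᵥ A *ᵥ extend e y 0 = y ⬝ᵥ A.submatrix e e *ᵥ y := by
  simp only [dotProduct]
  refine (Fintype.sum_of_injective e he _ _ (fun l hl => ?_) fun b => ?_).symm
  · rw [extend_apply' _ _ _ hl, Pi.zero_apply, zero_mul]
  · rw [he.extend_apply, mulVec_extend_apply he]

end Extend

theorem det_submatrix_eq_zero_of_mulVec_eq_zero {ι κ R : Type*} [Fintype ι] [Fintype κ]
    [DecidableEq κ] [CommRing R] [IsDomain R] {A : Matrix ι ι R} {e : κ → ι} (he : Injective e)
    {z : ι → R} (hz : A *ᵥ z = 0) (hz_range : ∀ l ∉ Set.range e, z l = 0) {a : κ}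
    (hza : z (e a) ≠ 0) : (A.submatrix e e).det = 0 := by
  have hz_extend : extend e (z ∘ e) 0 = z := by
    funext l
    by_cases hl : l ∈ Set.range e
    · obtain ⟨b, rfl⟩ := hl
      exact he.extend_apply _ _ b
    · rw [extend_apply' _ _ _ hl, hz_range l hl, Pi.zero_apply]
  refine exists_mulVec_eq_zero_iff.mp ⟨z ∘ e, fun h => hza (congrFun h a), funext fun b => ?_⟩
  rw [← mulVec_extend_apply he, hz_extend, hz, Pi.zero_apply, Pi.zero_apply]

theorem apply_eq_zero_of_mulVec_eq_zero {ι R : Type*} [Fintype ι] [Field R] [LinearOrder R]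
    [IsStrictOrderedRing R] {A : Matrix ι ι R} (hoff : ∀ i j, i ≠ j → A i j ≤ 0) {z : ι → R}
    (hz : A *ᵥ z = 0) (hz_nonneg : 0 ≤ z) {i j : ι} (hi : z i = 0) (hj : z j ≠ 0) :
    A i j = 0 := by
  have hterms : ∀ l ∈ univ, A i l * z l ≤ 0 := fun l _ => by
    rcases eq_or_ne i l with rfl | hil
    · rw [hi, mul_zero]
    · exact mul_nonpos_of_nonpos_of_nonneg (hoff i l hil) (hz_nonneg l)
  have hrow : ∑ l, A i l * z l = 0 := congrFun hz i
  exact (mul_eq_zero.mp ((sum_eq_zero_iff_of_nonpos hterms).mp hrow j (mem_univ j))).resolve_right hj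

namespace PosSemidef

variable {ι : Type*} [Fintype ι] {A : Matrix ι ι ℝ}

theorem mulVec_abs_eq_zero (hA : A.PosSemidef) (hoff : ∀ i j, i ≠ j → A i j ≤ 0) {x : ι → ℝ}
    (hx : A *ᵥ x = 0) : A *ᵥ |x| = 0 := by
  rw [← hA.dotProduct_mulVec_zero_iff]
  refine le_antisymm ?_ (hA.dotProduct_mulVec_nonneg _)
  calc star |x| ⬝ᵥ A *ᵥ |x| ≤ star x ⬝ᵥ A *ᵥ x := by
        simp only [star_trivial, dotProduct, mulVec, mul_sum]
        refine sum_le_sum fun i _ => sum_le_sum fun j _ => ?_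
        rcases eq_or_ne i j with rfl | hij
        · simp only [Pi.abs_apply]
          rw [mul_left_comm, abs_mul_abs_self, mul_left_comm]
        · have hprod : x i * x j ≤ |x i| * |x j| := abs_mul (x i) (x j) ▸ le_abs_self _
          simp only [Pi.abs_apply]
          nlinarith [hoff i j hij]
    _ = 0 := by rw [hx, dotProduct_zero]

theorem exists_nonneg_mulVec_eq_zero_forall_support_subset (hA : A.PosSemidef)
    (hoff : ∀ i j, i ≠ j → A i j ≤ 0) :
    ∃ z : ι → ℝ, A *ᵥ z = 0 ∧ 0 ≤ z ∧ ∀ x, A *ᵥ x = 0 → support x ⊆ support z := by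
  classical
  have hwitness : ∀ i, ∃ y : ι → ℝ, A *ᵥ y = 0 ∧ 0 ≤ y ∧
      ((∃ x, A *ᵥ x = 0 ∧ x i ≠ 0) → y i ≠ 0) := fun i => by
    by_cases h : ∃ x, A *ᵥ x = 0 ∧ x i ≠ 0
    · obtain ⟨x, hx, hxi⟩ := h
      exact ⟨|x|, hA.mulVec_abs_eq_zero hoff hx, abs_nonneg x, fun _ => abs_ne_zero.mpr hxi⟩
    · exact ⟨0, mulVec_zero A, le_rfl, fun h' => absurd h' h⟩
  choose y hy hy_nonneg hy_ne using hwitness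
  refine ⟨∑ i, y i, by rw [mulVec_sum]; exact sum_eq_zero fun i _ => hy i,
    sum_nonneg fun i _ => hy_nonneg i, fun x hx l hxl => ?_⟩
  have hyl : 0 < y l l := (hy_nonneg l l).lt_of_ne (hy_ne l ⟨x, hx, hxl⟩).symm
  have hle : y l l ≤ (∑ i, y i) l := by
    rw [Finset.sum_apply]
    exact single_le_sum (fun i _ => hy_nonneg i l) (mem_univ l)
  exact (hyl.trans_le hle).ne'

theorem posDef_submatrix {κ : Type*} [Fintype κ] (hA : A.PosSemidef) {e : κ → ι}
    (he : Injective e) (hker : ∀ x, A *ᵥ x = 0 → ∀ a, x (e a) = 0) :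
    (A.submatrix e e).PosDef := by
  have hsub := hA.submatrix e
  refine posDef_iff_dotProduct_mulVec.mpr ⟨hsub.1, fun y hy => ?_⟩
  refine (hsub.dotProduct_mulVec_nonneg y).lt_of_ne fun hq => hy (funext fun a => ?_)
  have hext : A *ᵥ extend e y 0 = 0 := by
    rw [← hA.dotProduct_mulVec_zero_iff, star_trivial, extend_dotProduct_mulVec_extend he]
    simpa only [star_trivial] using hq.symm
  rw [← he.extend_apply y 0 a, hker _ hext a, Pi.zero_apply]

end PosSemidef

end Matrix

theorem Equiv.Perm.exists_mem_iff_lt_card {n : ℕ} (S : Finset (Fin n)) :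
    ∃ σ : Equiv.Perm (Fin n), ∀ i, σ i ∈ S ↔ (i : ℕ) < #S := by
  have hn : #S + (n - #S) = n := Nat.add_sub_cancel' (card_le_univ S |>.trans_eq (card_fin n))
  let eS : Fin #S ≃ {l // l ∈ S} := (Fintype.equivFinOfCardEq (Fintype.card_coe S)).symm
  let eC : Fin (n - #S) ≃ {l // l ∉ S} := (Fintype.equivFinOfCardEq (by
    rw [Fintype.card_subtype_compl, Fintype.card_coe, Fintype.card_fin])).symm
  let E : Fin (#S + (n - #S)) ≃ Fin n :=
    finSumFinEquiv.symm.trans ((eS.sumCongr eC).trans (Equiv.sumCompl (· ∈ S)))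
  refine ⟨(finCongr hn.symm).trans E, fun i => ?_⟩
  obtain ⟨s, rfl⟩ := (finSumFinEquiv.trans (finCongr hn)).surjective i
  rcases s with a | b
  · simp [E, (eS a).2]
  · simp [E, (eC b).2]

theorem stmt_3 {n : ℕ} (A : Matrix (Fin n) (Fin n) ℝ) (hA : A.PosSemidef)
    (hoff : ∀ i j : Fin n, i ≠ j → A i j ≤ 0) :
    ∃ (k : ℕ) (hk : k ≤ n) (σ : Equiv.Perm (Fin n)),
      let B : Matrix (Fin n) (Fin n) ℝ := A.submatrix σ σ
      let f : Fin k → Fin n := fun i => ⟨i.1, lt_of_lt_of_le i.2 hk⟩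
      let g : Fin (n - k) → Fin n := fun i => ⟨k + i.1, by omega⟩
      (∀ (i : Fin k) (j : Fin (n - k)), B (f i) (g j) = 0 ∧ B (g j) (f i) = 0) ∧
      (k = 0 ∨ (B.submatrix f f).det = 0) ∧
      (B.submatrix g g).PosDef := by
  classical
  obtain ⟨z, hz, hz_nonneg, hz_max⟩ :=
    hA.exists_nonneg_mulVec_eq_zero_forall_support_subset hoff
  set S : Finset (Fin n) := {l | z l ≠ 0}
  obtain ⟨σ, hσ⟩ := Equiv.Perm.exists_mem_iff_lt_card S
  refine ⟨#S, card_le_univ S |>.trans_eq (card_fin n), σ, ?_⟩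
  intro B f g
  have hf : ∀ i, z (σ (f i)) ≠ 0 := fun i => by simpa [S] using (hσ (f i)).mpr i.2
  have hg : ∀ j, z (σ (g j)) = 0 := fun j => by simpa [S, g] using (hσ (g j)).not.mpr
  have hf_inj : Injective (σ ∘ f) := σ.injective.comp fun i i' h => Fin.ext (Fin.mk.inj h)
  have hg_inj : Injective (σ ∘ g) := σ.injective.comp fun j j' h => Fin.ext (by
    simpa [g] using h)
  have hcross : ∀ i j, A (σ (g j)) (σ (f i)) = 0 := fun i j =>
    apply_eq_zero_of_mulVec_eq_zero hoff hz hz_nonneg (hg j) (hf i)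
  refine ⟨fun i j => ⟨?_, hcross i j⟩, ?_, ?_⟩
  · simpa [B, hcross] using (hA.1.apply (σ (f i)) (σ (g j))).symm
  · rcases Nat.eq_zero_or_pos #S with hk | hk
    · exact Or.inl hk
    refine Or.inr (show (A.submatrix (σ ∘ f) (σ ∘ f)).det = 0 from
      det_submatrix_eq_zero_of_mulVec_eq_zero hf_inj hz (fun l hl => ?_) (hf ⟨0, hk⟩))
    by_contra hzl
    exact hl ⟨⟨σ.symm l, by simpa using (hσ (σ.symm l)).mp (by simpa [S] using hzl)⟩, by simp [f]⟩
  · exact hA.posDef_submatrix hg_inj fun x hx j => not_not.mp fun hxj => hz_max x hx hxj (hg j)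
end

section
/- Let A be the symmetric block matrix [[M, F],[F^T, B]] with F entrywise nonnegative. Then A is copositive if and only if both M and B are copositive, and A is SPN if and only if both M and B are SPN. -/
open Matrix

/-! On a nonnegative vector `(x, y)` the nonnegative off-diagonal blocks only add the nonnegative
terms `xᵀ F y + yᵀ Fᵀ x` to the quadratic form, and in an SPN splitting they can be absorbed into
the nonnegative part, the semidefinite part being block diagonal. Conversely, copositivity is
tested on vectors supported on one block, and SPN splittings restrict to principal submatrices. -/

namespace Matrix

variable {ι κ R : Type*} [Fintype ι] [Fintype κ]

theorem sumElim_dotProduct_fromBlocks_mulVec [CommSemiring R] (A : Matrix ι ι R)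
    (B : Matrix ι κ R) (C : Matrix κ ι R) (D : Matrix κ κ R) (u x : ι → R) (v y : κ → R) :
    Sum.elim u v ⬝ᵥ fromBlocks A B C D *ᵥ Sum.elim x y =
      u ⬝ᵥ A *ᵥ x + u ⬝ᵥ B *ᵥ y + (v ⬝ᵥ C *ᵥ x + v ⬝ᵥ D *ᵥ y) := by
  simp only [fromBlocks_mulVec, sumElim_dotProduct_sumElim, dotProduct_add, Sum.elim_comp_inl,
    Sum.elim_comp_inr]

theorem dotProduct_mulVec_nonneg_of_nonneg [CommSemiring R] [PartialOrder R] [IsOrderedRing R]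
    {A : Matrix ι κ R} (hA : ∀ i j, 0 ≤ A i j) {x : ι → R} {y : κ → R} (hx : 0 ≤ x)
    (hy : 0 ≤ y) : 0 ≤ x ⬝ᵥ A *ᵥ y :=
  dotProduct_nonneg_of_nonneg hx fun i => dotProduct_nonneg_of_nonneg (hA i) hy

theorem PosSemidef.fromBlocks_diag [CommRing R] [PartialOrder R] [StarRing R]
    [StarOrderedRing R] {P : Matrix ι ι R} {Q : Matrix κ κ R} (hP : P.PosSemidef)
    (hQ : Q.PosSemidef) : (fromBlocks P 0 0 Q).PosSemidef := by
  refine .of_dotProduct_mulVec_nonneg (hP.1.fromBlocks (by simp) hQ.1) fun z => ?_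
  rw [← Sum.elim_comp_inl_inr z, Function.star_sumElim, sumElim_dotProduct_fromBlocks_mulVec]
  simpa only [zero_mulVec, dotProduct_zero, add_zero, zero_add]
    using add_nonneg (hP.dotProduct_mulVec_nonneg _) (hQ.dotProduct_mulVec_nonneg _)

end Matrix

variable {ι κ : Type*} [Fintype ι] [Fintype κ]

theorem Copositive.of_fromBlocks₁₁ {A : Matrix ι ι ℝ} {B : Matrix ι κ ℝ} {C : Matrix κ ι ℝ}
    {D : Matrix κ κ ℝ} (h : Copositive (fromBlocks A B C D)) : Copositive A := fun x hx => by
  simpa [sumElim_dotProduct_fromBlocks_mulVec] using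
    h (Sum.elim x 0) (Sum.forall.2 ⟨hx, fun _ => le_rfl⟩)

theorem Copositive.of_fromBlocks₂₂ {A : Matrix ι ι ℝ} {B : Matrix ι κ ℝ} {C : Matrix κ ι ℝ}
    {D : Matrix κ κ ℝ} (h : Copositive (fromBlocks A B C D)) : Copositive D := fun y hy => by
  simpa [sumElim_dotProduct_fromBlocks_mulVec] using
    h (Sum.elim 0 y) (Sum.forall.2 ⟨fun _ => le_rfl, hy⟩)

theorem Copositive.fromBlocks {A : Matrix ι ι ℝ} {B : Matrix ι κ ℝ} {C : Matrix κ ι ℝ}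
    {D : Matrix κ κ ℝ} (hA : Copositive A) (hD : Copositive D) (hB : ∀ i j, 0 ≤ B i j)
    (hC : ∀ i j, 0 ≤ C i j) : Copositive (fromBlocks A B C D) := fun z hz => by
  have hx : 0 ≤ z ∘ Sum.inl := fun i => hz _
  have hy : 0 ≤ z ∘ Sum.inr := fun j => hz _
  rw [← Sum.elim_comp_inl_inr z, sumElim_dotProduct_fromBlocks_mulVec]
  exact add_nonneg (add_nonneg (hA _ hx) (dotProduct_mulVec_nonneg_of_nonneg hB hx hy))
    (add_nonneg (dotProduct_mulVec_nonneg_of_nonneg hC hy hx) (hD _ hy))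

theorem copositive_fromBlocks_iff {A : Matrix ι ι ℝ} {B : Matrix ι κ ℝ} {C : Matrix κ ι ℝ}
    {D : Matrix κ κ ℝ} (hB : ∀ i j, 0 ≤ B i j) (hC : ∀ i j, 0 ≤ C i j) :
    Copositive (fromBlocks A B C D) ↔ Copositive A ∧ Copositive D :=
  ⟨fun h => ⟨h.of_fromBlocks₁₁, h.of_fromBlocks₂₂⟩, fun h => h.1.fromBlocks h.2 hB hC⟩

theorem SPN.submatrix {A : Matrix ι ι ℝ} (h : SPN A) (e : κ → ι) : SPN (A.submatrix e e) := by
  obtain ⟨P, N, hP, hN, rfl⟩ := h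
  exact ⟨P.submatrix e e, N.submatrix e e, hP.submatrix e, fun i j => hN _ _, rfl⟩

theorem SPN.fromBlocks {A : Matrix ι ι ℝ} {B : Matrix ι κ ℝ} {C : Matrix κ ι ℝ}
    {D : Matrix κ κ ℝ} (hA : SPN A) (hD : SPN D) (hB : ∀ i j, 0 ≤ B i j)
    (hC : ∀ i j, 0 ≤ C i j) : SPN (fromBlocks A B C D) := by
  obtain ⟨P, N, hP, hN, rfl⟩ := hA
  obtain ⟨Q, L, hQ, hL, rfl⟩ := hD
  refine ⟨Matrix.fromBlocks P 0 0 Q, Matrix.fromBlocks N B C L, hP.fromBlocks_diag hQ, ?_, ?_⟩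
  · rintro (i | i) (j | j)
    exacts [hN i j, hB i j, hC i j, hL i j]
  · simp only [fromBlocks_add, zero_add]

theorem spn_fromBlocks_iff {A : Matrix ι ι ℝ} {B : Matrix ι κ ℝ} {C : Matrix κ ι ℝ}
    {D : Matrix κ κ ℝ} (hB : ∀ i j, 0 ≤ B i j) (hC : ∀ i j, 0 ≤ C i j) :
    SPN (fromBlocks A B C D) ↔ SPN A ∧ SPN D :=
  ⟨fun h => ⟨h.submatrix Sum.inl, h.submatrix Sum.inr⟩, fun h => h.1.fromBlocks h.2 hB hC⟩

theorem stmt_4_general {r m : ℕ} (M : Matrix (Fin r) (Fin r) ℝ) (B : Matrix (Fin m) (Fin m) ℝ)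
    (F : Matrix (Fin r) (Fin m) ℝ)
    (hF : ∀ i j, 0 ≤ F i j) :
    (Copositive (Matrix.fromBlocks M F Fᵀ B) ↔ Copositive M ∧ Copositive B) ∧
    (SPN (Matrix.fromBlocks M F Fᵀ B) ↔ SPN M ∧ SPN B) :=
  ⟨copositive_fromBlocks_iff hF fun i j => hF j i, spn_fromBlocks_iff hF fun i j => hF j i⟩

theorem stmt_4 {r m : ℕ} (M : Matrix (Fin r) (Fin r) ℝ) (B : Matrix (Fin m) (Fin m) ℝ)
    (F : Matrix (Fin r) (Fin m) ℝ) (hM : M.IsSymm) (hB : B.IsSymm)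
    (hF : ∀ i j, 0 ≤ F i j) :
    (Copositive (Matrix.fromBlocks M F Fᵀ B) ↔ Copositive M ∧ Copositive B) ∧
    (SPN (Matrix.fromBlocks M F Fᵀ B) ↔ SPN M ∧ SPN B) :=
  stmt_4_general M B F hF
end

section
/- Let A = [[M, F],[F^T, B]] be symmetric with F entrywise nonpositive and M an invertible copositive matrix with negative off-diagonal entries. Then A is copositive if and only if the Schur complement A/M = B − F^T M^{−1} F is copositive. -/
open Matrix

/-! The Schur complement identity
`(x, y)ᵀ A (x, y) = (x + M⁻¹F y)ᵀ M (x + M⁻¹F y) + yᵀ (A/M) y` reduces the claim to two facts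
about `M`. It is positive definite, which gives the backward direction; and, being a Z-matrix,
its inverse is entrywise nonnegative, so for `y ≥ 0` the minimiser `x = -M⁻¹F y` is a
nonnegative vector, which gives the forward direction. -/

variable {ι : Type*} [Fintype ι] {A : Matrix ι ι ℝ}

/-- Passing from `x` to `|x|` can only lower the quadratic form of a matrix with nonpositive
off-diagonal entries, so copositivity already gives positive semidefiniteness. -/
theorem Copositive.posSemidef_of_offDiag_nonpos (hcop : Copositive A) (hA : A.IsSymm)
    (hoff : ∀ i j, i ≠ j → A i j ≤ 0) : A.PosSemidef := by
  have hHerm : A.IsHermitian := by rwa [IsHermitian, conjTranspose_eq_transpose_of_trivial]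
  refine .of_dotProduct_mulVec_nonneg hHerm fun x => ?_
  have habs : |x| ⬝ᵥ A *ᵥ |x| ≤ x ⬝ᵥ A *ᵥ x := by
    simp only [dotProduct, mulVec, Finset.mul_sum, Pi.abs_apply]
    refine Finset.sum_le_sum fun i _ => Finset.sum_le_sum fun j _ => ?_
    obtain rfl | hij := eq_or_ne i j
    · linear_combination A i i * abs_mul_abs_self (x i)
    · have hxx : x i * x j ≤ |x i| * |x j| := (le_abs_self _).trans_eq (abs_mul _ _)
      linear_combination mul_le_mul_of_nonpos_left hxx (hoff i j hij)
  simpa using (hcop |x| fun i => abs_nonneg (x i)).trans habs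

/-- With `u = p - q` split into positive and negative parts, `qᵀ A q = qᵀ A p - qᵀ (A u) ≤ 0`
because `p` and `q` have disjoint supports; definiteness then forces `q = 0`. -/
theorem Matrix.PosDef.nonneg_of_nonneg_mulVec (hA : A.PosDef) (hoff : ∀ i j, i ≠ j → A i j ≤ 0)
    {u : ι → ℝ} (hu : 0 ≤ A *ᵥ u) : 0 ≤ u := by
  set p : ι → ℝ := fun i => max (u i) 0
  set q : ι → ℝ := fun i => max (-u i) 0
  have hpq : u = p - q := funext fun i => (max_zero_sub_max_neg_zero_eq_self (u i)).symm
  have hcross : q ⬝ᵥ A *ᵥ p ≤ 0 := by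
    simp only [dotProduct, mulVec, Finset.mul_sum]
    refine Finset.sum_nonpos fun i _ => Finset.sum_nonpos fun j _ => ?_
    obtain rfl | hij := eq_or_ne i j
    · have : q i * p i = 0 := by
        rcases le_total (u i) 0 with h | h <;> simp [p, q, h]
      linear_combination A i i * this
    · exact mul_nonpos_of_nonneg_of_nonpos (le_max_right _ _)
        (mul_nonpos_of_nonpos_of_nonneg (hoff i j hij) (le_max_right _ _))
  have hqu : 0 ≤ q ⬝ᵥ A *ᵥ u := dotProduct_nonneg_of_nonneg (fun i => le_max_right _ _) hu
  have hq : q = 0 := by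
    by_contra hq
    have := hA.dotProduct_mulVec_pos hq
    rw [hpq, mulVec_sub, dotProduct_sub] at hqu
    simp only [star_trivial] at this
    linarith
  rw [hpq, hq, sub_zero]
  exact fun i => le_max_right _ _

theorem stmt_5_general {r m : ℕ} (M : Matrix (Fin r) (Fin r) ℝ) (B : Matrix (Fin m) (Fin m) ℝ)
    (F : Matrix (Fin r) (Fin m) ℝ) (hM : M.IsSymm)
    (hMinv : IsUnit M.det) (hMcop : Copositive M)
    (hMoff : ∀ i j : Fin r, i ≠ j → M i j < 0)
    (hF : ∀ i j, F i j ≤ 0) :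
    Copositive (Matrix.fromBlocks M F Fᵀ B) ↔ Copositive (B - Fᵀ * M⁻¹ * F) := by
  have hoff i j (hij : i ≠ j) : M i j ≤ 0 := (hMoff i j hij).le
  have hPSD := hMcop.posSemidef_of_offDiag_nonpos hM hoff
  have hPD := hPSD.posDef_iff_isUnit.mpr ((isUnit_iff_isUnit_det M).mpr hMinv)
  let _ := M.invertibleOfIsUnitDet hMinv
  have hSchur (x : Fin r → ℝ) (y : Fin m → ℝ) :
      (x ⊕ᵥ y) ⬝ᵥ fromBlocks M F Fᵀ B *ᵥ (x ⊕ᵥ y) =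
        (x + (M⁻¹ * F) *ᵥ y) ⬝ᵥ M *ᵥ (x + (M⁻¹ * F) *ᵥ y) + y ⬝ᵥ (B - Fᵀ * M⁻¹ * F) *ᵥ y := by
    simpa [dotProduct_mulVec] using schur_complement_eq₁₁ F B x y hPD.1
  constructor
  · intro hA y hy
    have hx : 0 ≤ -((M⁻¹ * F) *ᵥ y) := hPD.nonneg_of_nonneg_mulVec hoff <| by
      rw [mulVec_neg, mulVec_mulVec, ← Matrix.mul_assoc, mul_inv_of_invertible, Matrix.one_mul,
        ← neg_mulVec]
      exact fun i => dotProduct_nonneg_of_nonneg (fun j => neg_nonneg.mpr (hF i j)) hy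
    have := hA (-((M⁻¹ * F) *ᵥ y) ⊕ᵥ y) (Sum.forall.mpr ⟨hx, hy⟩)
    rwa [hSchur, neg_add_cancel, zero_dotProduct, zero_add] at this
  · intro hS z hz
    rw [← Sum.elim_comp_inl_inr z, hSchur]
    refine add_nonneg ?_ (hS _ fun j => hz _)
    simpa only [star_trivial] using hPSD.dotProduct_mulVec_nonneg _

theorem stmt_5 {r m : ℕ} (M : Matrix (Fin r) (Fin r) ℝ) (B : Matrix (Fin m) (Fin m) ℝ)
    (F : Matrix (Fin r) (Fin m) ℝ) (hM : M.IsSymm) (hB : B.IsSymm)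
    (hMinv : IsUnit M.det) (hMcop : Copositive M)
    (hMoff : ∀ i j : Fin r, i ≠ j → M i j < 0)
    (hF : ∀ i j, F i j ≤ 0) :
    Copositive (Matrix.fromBlocks M F Fᵀ B) ↔ Copositive (B - Fᵀ * M⁻¹ * F) :=
  stmt_5_general M B F hM hMinv hMcop hMoff hF
end

section
/- If A is an n×n copositive matrix that has a positive semidefinite principal submatrix of order n−1, then A is SPN. -/
/-!
Delete row and column `i` so that `A = [[a, bᵀ], [b, B]]` with `B` positive semidefinite. It
suffices to find `p ≥ 0` such that `[[a, (b - p)ᵀ], [b - p, B]]` is positive semidefinite, for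
then `A` is that matrix plus the nonnegative matrix carrying `p` in row and column `i`.
Factor `B = MᵀM`. By Cauchy–Schwarz, any `b - p = Mᵀy` with `|y|² ≤ a` will do, so we need
`b ∈ Mᵀ{|y|² ≤ a} + ℝ≥0ⁿ`, a closed convex set. If `b` were outside it, a separating functional
`l` would be nonnegative with `b ⬝ l < 0` and `(b ⬝ l)² > a |Ml|²`; but copositivity of `A` at the
nonnegative vectors `(t, l)`, `t ≥ 0`, gives exactly the reverse inequality.
-/

open Matrix

open Finset
open scoped Pointwise MatrixOrder

section Quadratic

variable {a β q : ℝ}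

lemma sq_le_mul_of_forall_nonneg_quadratic (ha : 0 ≤ a) (hβ : β < 0)
    (h : ∀ t, 0 ≤ t → 0 ≤ a * t ^ 2 + 2 * t * β + q) : β ^ 2 ≤ a * q := by
  rcases ha.eq_or_lt with rfl | ha
  · have := h ((|q| + 1) / (-2 * β)) (div_nonneg (by positivity) (by linarith))
    have h2 : 2 * ((|q| + 1) / (-2 * β)) * β = -(|q| + 1) := by
      field_simp [hβ.ne]
    linarith [le_abs_self q]
  · have := h (-β / a) (div_nonneg (by linarith) ha.le)
    have h2 : a * (a * (-β / a) ^ 2 + 2 * (-β / a) * β + q) = a * q - β ^ 2 := by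
      field_simp; ring
    nlinarith [mul_nonneg ha.le this]

lemma quadratic_nonneg_of_sq_le (ha : 0 ≤ a) (hq : 0 ≤ q) (h : β ^ 2 ≤ a * q) (t : ℝ) :
    0 ≤ a * t ^ 2 + 2 * t * β + q := by
  rcases ha.eq_or_lt with rfl | ha
  · nlinarith [sq_nonneg β]
  · nlinarith [sq_nonneg (a * t + β)]

end Quadratic

namespace Matrix

section DotProduct

variable {ι : Type*} [Fintype ι]

lemma dotProduct_self_nonneg (x : ι → ℝ) : 0 ≤ x ⬝ᵥ x :=
  sum_nonneg fun i _ => mul_self_nonneg (x i)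

lemma dotProduct_sq_le_dotProduct_self_mul_dotProduct_self (x y : ι → ℝ) :
    (x ⬝ᵥ y) ^ 2 ≤ (x ⬝ᵥ x) * (y ⬝ᵥ y) := by
  simpa only [dotProduct, sq] using Finset.sum_mul_sq_le_sq_mul_sq univ x y

lemma norm_toLp_sq (y : ι → ℝ) : ‖WithLp.toLp 2 y‖ ^ 2 = y ⬝ᵥ y := by
  rw [EuclideanSpace.real_norm_sq_eq]
  simp [dotProduct, sq]

lemma image_ofLp_closedBall_sqrt {a : ℝ} (ha : 0 ≤ a) :
    WithLp.ofLp '' Metric.closedBall (0 : EuclideanSpace ℝ ι) √a = {y | y ⬝ᵥ y ≤ a} := by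
  ext y
  simp only [Set.mem_image, Metric.mem_closedBall, dist_zero_right, Set.mem_ofPred_eq,
    Real.le_sqrt (norm_nonneg _) ha, ← norm_toLp_sq]
  exact ⟨fun ⟨x, hx, hxy⟩ => hxy ▸ hx, fun h => ⟨WithLp.toLp 2 y, h, rfl⟩⟩

lemma isCompact_setOf_dotProduct_self_le {a : ℝ} (ha : 0 ≤ a) :
    IsCompact {y : ι → ℝ | y ⬝ᵥ y ≤ a} := by
  rw [← image_ofLp_closedBall_sqrt ha]
  exact (isCompact_closedBall _ _).image (PiLp.continuous_ofLp 2 _)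

lemma convex_setOf_dotProduct_self_le {a : ℝ} (ha : 0 ≤ a) :
    Convex ℝ {y : ι → ℝ | y ⬝ᵥ y ≤ a} := by
  rw [← image_ofLp_closedBall_sqrt ha]
  exact (convex_closedBall _ _).linear_image (WithLp.linearEquiv 2 ℝ (ι → ℝ)).toLinearMap

lemma mul_dotProduct_self_lt_sq {a u : ℝ} (m : ι → ℝ) (ha : 0 ≤ a) (hu : u < 0)
    (h : ∀ y : ι → ℝ, y ⬝ᵥ y ≤ a → u < m ⬝ᵥ y) : a * (m ⬝ᵥ m) < u ^ 2 := by
  have hs := dotProduct_self_nonneg m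
  set s := m ⬝ᵥ m
  rcases hs.eq_or_lt with hs | hs
  · rw [← hs, mul_zero]
    nlinarith
  · -- the minimum of `m ⬝ᵥ y` on the ellipsoid is attained at a negative multiple of `m`
    have hy := h (-√(a / s) • m) (by
      rw [smul_dotProduct, dotProduct_smul, smul_eq_mul, smul_eq_mul, ← mul_assoc, neg_mul_neg,
        Real.mul_self_sqrt (by positivity), div_mul_cancel₀ _ hs.ne'])
    rw [dotProduct_smul, smul_eq_mul] at hy
    have hsq := Real.sq_sqrt (div_nonneg ha hs.le)
    have : a * s = (√(a / s) * s) ^ 2 := by rw [mul_pow, hsq]; field_simp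
    rw [this, ← neg_sq u]
    exact pow_lt_pow_left₀ (by linarith) (by positivity) two_ne_zero

lemma exists_eq_vecMul_add_nonneg {κ : Type*} [Fintype κ] (M : Matrix κ ι ℝ) {a : ℝ} (ha : 0 ≤ a)
    (b : ι → ℝ) (hb : ∀ x, 0 ≤ x → b ⬝ᵥ x < 0 → (b ⬝ᵥ x) ^ 2 ≤ a * (M *ᵥ x ⬝ᵥ M *ᵥ x)) :
    ∃ y q, y ⬝ᵥ y ≤ a ∧ 0 ≤ q ∧ b = y ᵥ* M + q := by
  classical
  set K := (· ᵥ* M) '' {y : κ → ℝ | y ⬝ᵥ y ≤ a} + Set.Ici (0 : ι → ℝ)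
  suffices b ∈ K by
    obtain ⟨_, ⟨y, hy, rfl⟩, q, hq, rfl⟩ := this
    exact ⟨y, q, hy, hq, rfl⟩
  by_contra hbK
  have hK_convex : Convex ℝ K :=
    ((convex_setOf_dotProduct_self_le ha).linear_image (vecMulLinear M)).add (convex_Ici 0)
  have hK_closed : IsClosed K :=
    isClosed_Ici.add_left_of_isCompact ((isCompact_setOf_dotProduct_self_le ha).image (by fun_prop))
  obtain ⟨f, u, hfb, hfK⟩ := geometric_hahn_banach_point_closed hK_convex hK_closed hbK
  set l : ι → ℝ := (dotProductEquiv ℝ ι).symm f.toLinearMap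
  have hf : ∀ v, f v = l ⬝ᵥ v := fun v =>
    (LinearMap.congr_fun ((dotProductEquiv ℝ ι).apply_symm_apply f.toLinearMap) v).symm
  have hmem : ∀ y, y ⬝ᵥ y ≤ a → ∀ q, 0 ≤ q → u < M *ᵥ l ⬝ᵥ y + l ⬝ᵥ q := fun y hy q hq => by
    have := hfK _ (Set.add_mem_add ⟨y, hy, rfl⟩ (Set.mem_Ici.2 hq))
    rwa [hf, dotProduct_add, dotProduct_comm l, ← dotProduct_mulVec, dotProduct_comm y] at this
  have hu : u < 0 := by simpa using hmem 0 (by simpa using ha) 0 le_rfl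
  have hl : ∀ i, 0 ≤ l i := fun i => by
    by_contra! hli
    have := hmem 0 (by simpa using ha) (Pi.single i (u / l i))
      (Pi.single_nonneg.2 (div_nonneg_of_nonpos hu.le hli.le))
    simp [dotProduct_single, mul_div_cancel₀ _ hli.ne] at this
  have hMl : a * (M *ᵥ l ⬝ᵥ M *ᵥ l) < u ^ 2 :=
    mul_dotProduct_self_lt_sq _ ha hu fun y hy => by simpa using hmem y hy 0 le_rfl
  have hbl : b ⬝ᵥ l < u := by rwa [hf, dotProduct_comm] at hfb
  nlinarith [hb l hl (hbl.trans hu)]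

lemma PosSemidef.exists_nonneg_sub_quadratic_nonneg {B : Matrix ι ι ℝ} (hB : B.PosSemidef)
    (a : ℝ) (b : ι → ℝ)
    (h : ∀ t : ℝ, 0 ≤ t → ∀ x : ι → ℝ, 0 ≤ x → 0 ≤ a * t ^ 2 + 2 * t * (b ⬝ᵥ x) + x ⬝ᵥ B *ᵥ x) :
    ∃ p : ι → ℝ, 0 ≤ p ∧
      ∀ t x, 0 ≤ a * t ^ 2 + 2 * t * ((b - p) ⬝ᵥ x) + x ⬝ᵥ B *ᵥ x := by
  classical
  obtain ⟨M, rfl⟩ := CStarAlgebra.nonneg_iff_eq_star_mul_self.mp hB.nonneg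
  have hquad : ∀ x, x ⬝ᵥ (star M * M) *ᵥ x = M *ᵥ x ⬝ᵥ M *ᵥ x := fun x => by
    simp only [← mulVec_mulVec, dotProduct_mulVec, star_eq_conjTranspose, vecMul_conjTranspose,
      star_trivial]
  simp only [hquad] at h ⊢
  have ha : 0 ≤ a := by simpa using h 1 zero_le_one 0 le_rfl
  obtain ⟨y, p, hy, hp, rfl⟩ := exists_eq_vecMul_add_nonneg M ha b fun x hx hbx =>
    sq_le_mul_of_forall_nonneg_quadratic ha hbx fun t ht => h t ht x hx
  refine ⟨p, hp, fun t x => quadratic_nonneg_of_sq_le ha (dotProduct_self_nonneg _) ?_ t⟩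
  rw [add_sub_cancel_right, ← dotProduct_mulVec]
  calc (y ⬝ᵥ M *ᵥ x) ^ 2 ≤ (y ⬝ᵥ y) * (M *ᵥ x ⬝ᵥ M *ᵥ x) :=
        dotProduct_sq_le_dotProduct_self_mul_dotProduct_self _ _
    _ ≤ a * (M *ᵥ x ⬝ᵥ M *ᵥ x) := mul_le_mul_of_nonneg_right hy (dotProduct_self_nonneg _)

end DotProduct

section Border

variable {R : Type*} [CommRing R] {n : ℕ}

lemma dotProduct_mulVec_insertNth {A : Matrix (Fin (n + 1)) (Fin (n + 1)) R} (hA : A.IsSymm)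
    (i : Fin (n + 1)) (t : R) (x : Fin n → R) :
    i.insertNth t x ⬝ᵥ A *ᵥ i.insertNth t x =
      A i i * t ^ 2 + 2 * t * ((fun j => A i (i.succAbove j)) ⬝ᵥ x) +
        x ⬝ᵥ A.submatrix i.succAbove i.succAbove *ᵥ x := by
  have hcol : ∑ j, x j * (A (i.succAbove j) i * t) = t * ∑ j, A i (i.succAbove j) * x j := by
    rw [mul_sum]
    exact sum_congr rfl fun j _ => by rw [hA.apply]; ring
  simp only [dotProduct, mulVec, Fin.sum_univ_succAbove _ i, Fin.insertNth_apply_same,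
    Fin.insertNth_apply_succAbove, submatrix_apply, mul_add, sum_add_distrib, hcol]
  ring

/-- The symmetric matrix whose row and column `i` are `p` (with `0` at `(i, i)`), zero elsewhere. -/
def borderMatrix (i : Fin (n + 1)) (p : Fin n → R) : Matrix (Fin (n + 1)) (Fin (n + 1)) R :=
  vecMulVec (Pi.single i 1) (i.insertNth 0 p) + vecMulVec (i.insertNth 0 p) (Pi.single i 1)

variable (i : Fin (n + 1)) (p : Fin n → R)

lemma borderMatrix_isSymm : (borderMatrix i p).IsSymm := by
  simp [borderMatrix, IsSymm, transpose_add, transpose_vecMulVec, add_comm]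

@[simp] lemma borderMatrix_apply_self : borderMatrix i p i i = 0 := by
  simp [borderMatrix, vecMulVec_apply]

@[simp] lemma borderMatrix_apply_succAbove (j : Fin n) :
    borderMatrix i p i (i.succAbove j) = p j := by
  simp [borderMatrix, vecMulVec_apply, Fin.succAbove_ne]

@[simp] lemma submatrix_borderMatrix :
    (borderMatrix i p).submatrix i.succAbove i.succAbove = 0 := by
  ext j k
  simp [borderMatrix, vecMulVec_apply, Fin.succAbove_ne]

lemma borderMatrix_nonneg [PartialOrder R] [IsOrderedRing R] (hp : 0 ≤ p) (j k : Fin (n + 1)) :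
    0 ≤ borderMatrix i p j k := by
  have he : 0 ≤ (Pi.single i 1 : Fin (n + 1) → R) := Pi.single_nonneg.2 zero_le_one
  have hq : ∀ k, 0 ≤ (i.insertNth 0 p : Fin (n + 1) → R) k :=
    (Fin.forall_iff_succAbove i).2 ⟨by simp, fun j => by simpa using hp j⟩
  simp only [borderMatrix, add_apply, vecMulVec_apply]
  exact add_nonneg (mul_nonneg (he j) (hq k)) (mul_nonneg (hq j) (he k))

end Border

end Matrix

theorem stmt_7 {n : ℕ} (A : Matrix (Fin (n + 1)) (Fin (n + 1)) ℝ) (hA : A.IsSymm)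
    (hcop : Copositive A)
    (hsub : ∃ i : Fin (n + 1), (A.submatrix i.succAbove i.succAbove).PosSemidef) :
    SPN A := by
  obtain ⟨i, hB⟩ := hsub
  obtain ⟨p, hp, hpsd⟩ := hB.exists_nonneg_sub_quadratic_nonneg (A i i)
    (fun j => A i (i.succAbove j)) fun t ht x hx => by
      simpa only [dotProduct_mulVec_insertNth hA] using
        hcop (i.insertNth t x) (Fin.le_insertNth_iff.2 ⟨ht, hx⟩)
  have hP : (A - borderMatrix i p).IsSymm := hA.sub (borderMatrix_isSymm i p)
  refine ⟨A - borderMatrix i p, borderMatrix i p, ?_, borderMatrix_nonneg i p hp,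
    (sub_add_cancel _ _).symm⟩
  refine .of_dotProduct_mulVec_nonneg (isHermitian_iff_isSymm.2 hP) fun v => ?_
  rw [star_trivial, ← Fin.insertNth_self_removeNth i v, dotProduct_mulVec_insertNth hP]
  simp only [Matrix.sub_apply, borderMatrix_apply_self, borderMatrix_apply_succAbove,
    Matrix.submatrix_sub, Pi.sub_apply, submatrix_borderMatrix, sub_zero]
  exact hpsd (v i) (i.removeNth v)
end

section
/- Let A be a symmetric n×n matrix in ℳ_n (off-diagonal entries nondecreasing in rows and columns) with a_{1j} < 0 for all j ≥ 2 and a_{11} > 0. Then the Schur complement S = A(1) − (1/a_{11}) v v^T, where v = (a_{12},…,a_{1n})^T and A(1) is A with the first row and column deleted, again has off-diagonal entries nondecreasing in rows and columns, i.e., S ∈ ℳ_{n−1}. -/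
open Matrix

/-!
Deleting the first row and column preserves the monotonicity of the off-diagonal entries, and the
first row `v = (a₁₂, …, a₁ₙ)` is nondecreasing and negative. Hence `vᵢ vⱼ` is nonincreasing in
both indices, so subtracting `vᵢ vⱼ / a₁₁` with `a₁₁ > 0` keeps the entries nondecreasing.
-/

namespace Mn

variable {n : ℕ} {A : Matrix (Fin (n + 1)) (Fin (n + 1)) ℝ}

theorem succ (hA : Mn A) : Mn (fun i j : Fin n => A i.succ j.succ) :=
  fun _ _ _ _ hik hjl hij hkl =>
    hA _ _ _ _ (Fin.succ_le_succ_iff.mpr hik) (Fin.succ_le_succ_iff.mpr hjl)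
      (Fin.succ_injective _ |>.ne hij) (Fin.succ_injective _ |>.ne hkl)

theorem monotone_zero_succ (hA : Mn A) : Monotone (fun j : Fin n => A 0 j.succ) :=
  fun j l hjl =>
    hA _ _ _ _ le_rfl (Fin.succ_le_succ_iff.mpr hjl) (Fin.succ_ne_zero j).symm
      (Fin.succ_ne_zero l).symm

end Mn

theorem Mn.sub_mul_div {n : ℕ} {B : Matrix (Fin n) (Fin n) ℝ} {v : Fin n → ℝ} {c : ℝ}
    (hB : Mn B) (hv : Monotone v) (hv_nonpos : ∀ i, v i ≤ 0) (hc : 0 ≤ c) :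
    Mn (fun i j => B i j - v i * v j / c) := by
  intro i j k l hik hjl hij hkl
  have hprod : v k * v l ≤ v i * v j :=
    mul_le_mul_of_nonpos_of_nonpos (hv hik) (hv hjl) (hv_nonpos i) (hv_nonpos l)
  have hdiv : v k * v l / c ≤ v i * v j / c := div_le_div_of_nonneg_right hprod hc
  linarith [hB i j k l hik hjl hij hkl]

theorem stmt_9_general {n : ℕ} (A : Matrix (Fin (n + 1)) (Fin (n + 1)) ℝ)
    (hMn : Mn A) (hneg : ∀ j : Fin (n + 1), j ≠ 0 → A 0 j < 0)
    (hpos : 0 < A 0 0) :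
    Mn (fun i j : Fin n => A i.succ j.succ - A 0 i.succ * A 0 j.succ / A 0 0) :=
  hMn.succ.sub_mul_div hMn.monotone_zero_succ
    (fun j => (hneg _ (Fin.succ_ne_zero j)).le) hpos.le

theorem stmt_9 {n : ℕ} (A : Matrix (Fin (n + 1)) (Fin (n + 1)) ℝ) (hA : A.IsSymm)
    (hMn : Mn A) (hneg : ∀ j : Fin (n + 1), j ≠ 0 → A 0 j < 0)
    (hpos : 0 < A 0 0) :
    Mn (fun i j : Fin n => A i.succ j.succ - A 0 i.succ * A 0 j.succ / A 0 0) :=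
  stmt_9_general A hMn hneg hpos
end

section
/- Let A be a symmetric n×n matrix whose off-diagonal entries are nondecreasing in rows and columns (a_{ij} ≤ a_{kℓ} whenever i ≤ k, j ≤ ℓ, i ≠ j, k ≠ ℓ). Then A is copositive if and only if A is the sum of a positive semidefinite matrix and an entrywise nonnegative matrix. -/
open Matrix

/-!
Induction on `n`. If the first row of `A` is nonnegative, the ordering of the off-diagonal
entries makes all of `A` nonnegative. Otherwise `a₀₀ > 0`, since a zero diagonal entry of a
copositive matrix forces its row to be nonnegative. Let `v` be the negative part of the rest of the
first row, `u = (a₀₀, v)` and `C = A' - a₀₀⁻¹ v vᵀ`, where `A'` deletes the first row and column.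
Then `A = a₀₀⁻¹ u uᵀ + (0 ⊕ C) + N` with `N ≥ 0` carrying the positive part of the first row, so
it suffices to apply the induction hypothesis to `C`. Its off-diagonal entries are still ordered,
because `v` is nonpositive and nondecreasing. It is copositive: for `y ≥ 0`, restrict `y` to the
support of `v` and prepend the entry that makes the vector orthogonal to `u`. Copositivity of `A`
at this vector is that of `C` at the restriction, and undoing the restriction only adds
nonnegative terms.
-/

section Cones

variable {ι κ : Type*} [Fintype ι] [Fintype κ] {A B : Matrix ι ι ℝ}

theorem dotProduct_mulVec_eq_sum (x : ι → ℝ) (A : Matrix ι ι ℝ) :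
    x ⬝ᵥ A *ᵥ x = ∑ i, ∑ j, x i * A i j * x j := by
  simp only [dotProduct, mulVec, Finset.mul_sum, mul_assoc]

theorem Matrix.PosSemidef.spn (hA : A.PosSemidef) : SPN A :=
  ⟨A, 0, hA, fun _ _ => le_rfl, (add_zero A).symm⟩

theorem spn_of_nonneg (hA : ∀ i j, 0 ≤ A i j) : SPN A :=
  ⟨0, A, .zero, hA, (zero_add A).symm⟩

theorem SPN.add (hA : SPN A) (hB : SPN B) : SPN (A + B) := by
  obtain ⟨P, N, hP, hN, rfl⟩ := hA
  obtain ⟨P', N', hP', hN', rfl⟩ := hB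
  exact ⟨P + P', N + N', hP.add hP', fun i j => add_nonneg (hN i j) (hN' i j), by abel⟩

theorem SPN.transpose_mul_mul (hA : SPN A) {S : Matrix ι κ ℝ} (hS : ∀ i j, 0 ≤ S i j) :
    SPN (Sᵀ * A * S) := by
  obtain ⟨P, N, hP, hN, rfl⟩ := hA
  refine ⟨Sᵀ * P * S, Sᵀ * N * S, hP.conjTranspose_mul_mul_same S, fun i j => ?_, by
    rw [Matrix.mul_add, Matrix.add_mul]⟩
  simp only [mul_apply, transpose_apply]
  exact Finset.sum_nonneg fun k _ => mul_nonneg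
    (Finset.sum_nonneg fun l _ => mul_nonneg (hS l i) (hN l k)) (hS k j)

theorem SPN.copositive (hA : SPN A) : Copositive A := by
  obtain ⟨P, N, hP, hN, rfl⟩ := hA
  intro x hx
  rw [add_mulVec, dotProduct_add, dotProduct_mulVec_eq_sum x N]
  exact add_nonneg (by simpa using hP.dotProduct_mulVec_nonneg x) <| Finset.sum_nonneg
    fun i _ => Finset.sum_nonneg fun j _ => mul_nonneg (mul_nonneg (hx i) (hN i j)) (hx j)

theorem Copositive.apply_self_nonneg (hA : Copositive A) (i : ι) : 0 ≤ A i i := by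
  classical
  simpa using hA (Pi.single i 1) fun j => by by_cases h : j = i <;> simp [h]

theorem Copositive.apply_nonneg_of_apply_self_eq_zero (hA : Copositive A) (hsymm : A.IsSymm)
    {i : ι} (hii : A i i = 0) (j : ι) : 0 ≤ A i j := by
  classical
  rcases eq_or_ne i j with rfl | hij
  · exact hii.ge
  by_contra! hneg
  set t := (A j j + 1) / -A i j
  have ht : 0 ≤ t := div_nonneg (by linarith [hA.apply_self_nonneg j]) (by linarith)
  have hq := hA (Pi.single i t + Pi.single j 1) fun k => by
    by_cases hk : k = i <;> by_cases hk' : k = j <;> simp_all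
  have hji : A j i = A i j := hsymm.apply i j
  have htA : t * A i j = -(A j j + 1) := by
    have := hneg.ne
    simp only [t]; field_simp
  simp only [mulVec_add, mulVec_single, op_smul_eq_smul, MulOpposite.op_one, one_smul,
    dotProduct_add, dotProduct_smul, add_dotProduct, single_dotProduct, col_apply, hii, mul_zero,
    hji, one_mul, zero_add, smul_eq_mul] at hq
  nlinarith

theorem indicator_dotProduct_mulVec_indicator_le (s : Set ι) {y : ι → ℝ} (hy : ∀ i, 0 ≤ y i)
    (hA : ∀ i j, i ∉ s ∨ j ∉ s → 0 ≤ A i j) :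
    s.indicator y ⬝ᵥ A *ᵥ s.indicator y ≤ y ⬝ᵥ A *ᵥ y := by
  rw [dotProduct_mulVec_eq_sum, dotProduct_mulVec_eq_sum]
  refine Finset.sum_le_sum fun i _ => Finset.sum_le_sum fun j _ => ?_
  by_cases hi : i ∈ s <;> by_cases hj : j ∈ s
  · simp [hi, hj]
  all_goals
    simp only [Set.indicator_of_mem, Set.indicator_of_notMem, hi, hj, not_false_eq_true,
      mul_zero, zero_mul]
    exact mul_nonneg (mul_nonneg (hy i) (hA i j (by tauto))) (hy j)

end Cones

section Ordered

variable {m : ℕ}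

theorem Mn.submatrix_succ {A : Matrix (Fin (m + 1)) (Fin (m + 1)) ℝ} (hA : Mn A) :
    Mn (A.submatrix Fin.succ Fin.succ) :=
  fun _ _ _ _ hik hjl hij hkl => hA _ _ _ _ (Fin.succ_le_succ_iff.2 hik)
    (Fin.succ_le_succ_iff.2 hjl) (Fin.succ_injective _ |>.ne hij)
    (Fin.succ_injective _ |>.ne hkl)

theorem Mn.sub_smul_vecMulVec {B : Matrix (Fin m) (Fin m) ℝ} (hB : Mn B) {c : ℝ} (hc : 0 ≤ c)
    {v : Fin m → ℝ} (hv : Monotone v) (hv0 : ∀ i, v i ≤ 0) : Mn (B - c • vecMulVec v v) := by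
  intro i j k l hik hjl hij hkl
  have hvv : v k * v l ≤ v i * v j := calc
    v k * v l ≤ v i * v l := mul_le_mul_of_nonpos_right (hv hik) (hv0 l)
    _ ≤ v i * v j := mul_le_mul_of_nonpos_left (hv hjl) (hv0 i)
  simp only [Matrix.sub_apply, Matrix.smul_apply, vecMulVec_apply, smul_eq_mul]
  linarith [hB i j k l hik hjl hij hkl, mul_le_mul_of_nonneg_left hvv hc]

theorem Mn.apply_nonneg_of_zero_apply_nonneg {A : Matrix (Fin (m + 1)) (Fin (m + 1)) ℝ}
    (hA : Mn A) (hdiag : ∀ i, 0 ≤ A i i) {j : Fin (m + 1)} (hj0 : j ≠ 0) (hj : 0 ≤ A 0 j)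
    (i : Fin (m + 1)) : 0 ≤ A i j := by
  rcases eq_or_ne i j with rfl | hij
  · exact hdiag i
  · exact hj.trans (hA 0 j i j (Fin.zero_le i) le_rfl hj0.symm hij)

end Ordered

section FirstRowReduction

variable {m : ℕ} (A : Matrix (Fin (m + 1)) (Fin (m + 1)) ℝ)

def Matrix.negFirstRow : Fin m → ℝ := fun i => min (A 0 i.succ) 0

noncomputable def Matrix.firstRowReduction : Matrix (Fin m) (Fin m) ℝ :=
  A.submatrix Fin.succ Fin.succ - (A 0 0)⁻¹ • vecMulVec A.negFirstRow A.negFirstRow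

variable {A}

theorem negFirstRow_nonpos (i : Fin m) : A.negFirstRow i ≤ 0 := min_le_right _ _

theorem Mn.monotone_negFirstRow (hA : Mn A) : Monotone A.negFirstRow := fun i k hik =>
  min_le_min_right 0 <| hA 0 i.succ 0 k.succ le_rfl (Fin.succ_le_succ_iff.2 hik)
    (Fin.succ_ne_zero i).symm (Fin.succ_ne_zero k).symm

theorem Matrix.IsSymm.firstRowReduction (hsymm : A.IsSymm) : A.firstRowReduction.IsSymm :=
  (hsymm.submatrix _).sub (IsSymm.smul (transpose_vecMulVec _ _) _)

theorem Mn.firstRowReduction (hA : Mn A) (ha : 0 ≤ A 0 0) : Mn A.firstRowReduction :=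
  hA.submatrix_succ.sub_smul_vecMulVec (inv_nonneg.2 ha) hA.monotone_negFirstRow
    negFirstRow_nonpos

theorem firstRowReduction_apply_nonneg (hsymm : A.IsSymm) (hA : Mn A) (hdiag : ∀ i, 0 ≤ A i i)
    {i j : Fin m} (h : 0 ≤ A 0 i.succ ∨ 0 ≤ A 0 j.succ) : 0 ≤ A.firstRowReduction i j := by
  have hnonneg (k : Fin m) := hA.apply_nonneg_of_zero_apply_nonneg hdiag (Fin.succ_ne_zero k)
  rcases h with h | h
  · have : A.negFirstRow i = 0 := min_eq_right h
    simpa [firstRowReduction, vecMulVec_apply, this, hsymm.apply i.succ j.succ] using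
      hnonneg i h j.succ
  · have : A.negFirstRow j = 0 := min_eq_right h
    simpa [firstRowReduction, vecMulVec_apply, this] using hnonneg j h i.succ

theorem dotProduct_mulVec_cons (hsymm : A.IsSymm) (t : ℝ) (w : Fin m → ℝ) :
    Fin.cons t w ⬝ᵥ A *ᵥ Fin.cons t w =
      A 0 0 * t ^ 2 + 2 * t * ∑ i, A 0 i.succ * w i +
        w ⬝ᵥ A.submatrix Fin.succ Fin.succ *ᵥ w := by
  simp only [dotProduct_mulVec_eq_sum, Fin.sum_univ_succ, Fin.cons_zero, Fin.cons_succ,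
    submatrix_apply, Finset.sum_add_distrib, hsymm.apply 0]
  have hcross : ∑ i, w i * A 0 i.succ * t = t * ∑ i, A 0 i.succ * w i := by
    rw [Finset.mul_sum]; exact Finset.sum_congr rfl fun _ _ => by ring
  have hcross' : ∑ i, t * A 0 i.succ * w i = t * ∑ i, A 0 i.succ * w i := by
    rw [Finset.mul_sum]; exact Finset.sum_congr rfl fun _ _ => by ring
  rw [hcross, hcross']
  ring

theorem Copositive.firstRowReduction (hcop : Copositive A) (hsymm : A.IsSymm) (hA : Mn A)
    (ha : 0 < A 0 0) : Copositive A.firstRowReduction := by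
  intro y hy
  set s : Set (Fin m) := {i | A 0 i.succ < 0}
  set w := s.indicator y
  have hw (i : Fin m) : 0 ≤ w i := Set.indicator_nonneg (fun i _ => hy i) i
  have hrow : ∑ i, A 0 i.succ * w i = A.negFirstRow ⬝ᵥ w := by
    refine Finset.sum_congr rfl fun i _ => ?_
    by_cases hi : i ∈ s
    · rw [show A.negFirstRow i = A 0 i.succ from min_eq_left (le_of_lt hi)]
    · simp [w, hi]
  set t := -(A.negFirstRow ⬝ᵥ w) / A 0 0
  have ht : 0 ≤ t := div_nonneg (neg_nonneg.2 <| Finset.sum_nonpos fun i _ =>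
    mul_nonpos_of_nonpos_of_nonneg (negFirstRow_nonpos i) (hw i)) ha.le
  have hcons : Fin.cons t w ⬝ᵥ A *ᵥ Fin.cons t w = w ⬝ᵥ A.firstRowReduction *ᵥ w := by
    rw [dotProduct_mulVec_cons hsymm, hrow, Matrix.firstRowReduction, sub_mulVec,
      dotProduct_sub, smul_mulVec, vecMulVec_mulVec]
    simp only [t, op_smul_eq_smul, dotProduct_smul, smul_eq_mul,
      dotProduct_comm w A.negFirstRow]
    field_simp
    ring
  calc 0 ≤ Fin.cons t w ⬝ᵥ A *ᵥ Fin.cons t w := hcop _ fun i => Fin.cases ht hw i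
    _ = w ⬝ᵥ A.firstRowReduction *ᵥ w := hcons
    _ ≤ y ⬝ᵥ A.firstRowReduction *ᵥ y :=
      indicator_dotProduct_mulVec_indicator_le s hy fun i j hij =>
        firstRowReduction_apply_nonneg hsymm hA hcop.apply_self_nonneg <| by
          simpa [s, not_lt] using hij

theorem SPN.of_firstRowReduction (hsymm : A.IsSymm) (ha : 0 < A 0 0)
    (hC : SPN A.firstRowReduction) : SPN A := by
  set u : Fin (m + 1) → ℝ := Fin.cons (A 0 0) A.negFirstRow
  set S : Matrix (Fin m) (Fin (m + 1)) ℝ :=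
    (1 : Matrix (Fin (m + 1)) (Fin (m + 1)) ℝ).submatrix Fin.succ id
  set R := (A 0 0)⁻¹ • vecMulVec u u
  set L := Sᵀ * A.firstRowReduction * S
  have hR : R.PosSemidef := by
    simpa using (posSemidef_vecMulVec_self_star u).smul (inv_nonneg.2 ha.le)
  have hL : SPN L := hC.transpose_mul_mul fun i j => by
    by_cases h : i.succ = j <;> simp [S, one_apply, h]
  have hN (i j : Fin (m + 1)) : 0 ≤ (A - R - L) i j := by
    cases i using Fin.cases <;> cases j using Fin.cases <;>
      simp [R, L, S, u, negFirstRow, firstRowReduction, vecMulVec_apply, mul_apply, one_apply,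
        Fin.succ_ne_zero, (Fin.succ_ne_zero _).symm, ha.ne', mul_comm _ (A 0 0),
        fun k : Fin m => hsymm.apply 0 k.succ]
  simpa using (hR.spn.add hL).add (spn_of_nonneg hN)

end FirstRowReduction

theorem Copositive.spn_of_mn {n : ℕ} {A : Matrix (Fin n) (Fin n) ℝ} (hcop : Copositive A)
    (hsymm : A.IsSymm) (hA : Mn A) : SPN A := by
  induction n with
  | zero => exact spn_of_nonneg fun i => i.elim0
  | succ m ih =>
    by_cases hrow : ∀ j, 0 ≤ A 0 j
    · refine spn_of_nonneg fun i j => ?_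
      rcases eq_or_ne j 0 with rfl | hj
      · exact hsymm.apply 0 i ▸ hrow i
      · exact hA.apply_nonneg_of_zero_apply_nonneg hcop.apply_self_nonneg hj (hrow j) i
    obtain ⟨j, hj⟩ : ∃ j, A 0 j < 0 := by simpa using hrow
    have ha : 0 < A 0 0 := (hcop.apply_self_nonneg 0).lt_of_ne fun h =>
      hj.not_ge (hcop.apply_nonneg_of_apply_self_eq_zero hsymm h.symm j)
    exact .of_firstRowReduction hsymm ha <|
      ih (hcop.firstRowReduction hsymm hA ha) hsymm.firstRowReduction (hA.firstRowReduction ha.le)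

theorem stmt_10 {n : ℕ} (A : Matrix (Fin n) (Fin n) ℝ) (hA : A.IsSymm) (hMn : Mn A) :
    Copositive A ↔ SPN A :=
  ⟨fun h => h.spn_of_mn hA hMn, SPN.copositive⟩
end

section
/- Let v ∈ ℝ^n (n ≥ 2) be a vector with v₁ < 0 and v_i > 0 for all i ≥ 2. Then there exist a diagonal matrix D with positive diagonal entries such that D (vv^T) D ∈ ℳ_n, i.e., the rank-one matrix vv^T lies in the orbit of ℳ_n under positive diagonal rescaling; in particular vv^T is SPN. -/
/-!
Rescaling by `D = diag (1 / |vᵢ|)` turns `v vᵀ` into `s sᵀ` with `s = (-1, 1, …, 1)`, whose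
off-diagonal entries are `-1` in the first row and column and `1` elsewhere, hence nondecreasing.
Being a Gram matrix, `v vᵀ` is positive semidefinite and therefore SPN.
-/

open Matrix

theorem SPN.of_posSemidef {ι : Type*} [Fintype ι] {A : Matrix ι ι ℝ} (hA : A.PosSemidef) :
    SPN A :=
  ⟨A, 0, hA, fun _ _ => le_rfl, (add_zero A).symm⟩

theorem diagonal_mul_vecMulVec_mul_diagonal {ι α : Type*} [Fintype ι] [DecidableEq ι] [Semiring α]
    (d e u w : ι → α) :
    diagonal d * vecMulVec u w * diagonal e = vecMulVec (d * u) (w * e) := by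
  ext i j
  simp only [mul_diagonal, diagonal_mul, vecMulVec_apply, Pi.mul_apply, mul_assoc]

theorem mn_vecMulVec_self_of_neg_one_first {n : ℕ} (s : Fin (n + 1) → ℝ) (h0 : s 0 = -1)
    (hs : ∀ i, i ≠ 0 → s i = 1) : Mn (vecMulVec s s) := by
  have hsign : ∀ i, s i = -1 ∨ s i = 1 := fun i => by
    rcases eq_or_ne i 0 with rfl | hi
    exacts [.inl h0, .inr (hs i hi)]
  have hlower : ∀ a b, -1 ≤ s a * s b := fun a b => by
    rcases hsign a with ha | ha <;> rcases hsign b with hb | hb <;> norm_num [ha, hb]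
  intro i j k l hik hjl hij hkl
  simp only [vecMulVec_apply]
  by_cases hi : i = 0
  · subst hi
    rw [h0, hs j (Ne.symm hij)]
    simpa using hlower k l
  by_cases hj : j = 0
  · subst hj
    rw [h0, hs i hi]
    simpa using hlower k l
  have hk : k ≠ 0 := fun h => hi (nonpos_iff_eq_zero.mp (h ▸ hik))
  have hl : l ≠ 0 := fun h => hj (nonpos_iff_eq_zero.mp (h ▸ hjl))
  rw [hs i hi, hs j hj, hs k hk, hs l hl]

theorem stmt_16 {n : ℕ} (v : Fin (n + 2) → ℝ) (hv0 : v 0 < 0)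
    (hvi : ∀ i : Fin (n + 2), i ≠ 0 → 0 < v i) :
    (∃ d : Fin (n + 2) → ℝ, (∀ i, 0 < d i) ∧
      Mn (Matrix.diagonal d * Matrix.vecMulVec v v * Matrix.diagonal d)) ∧
    SPN (Matrix.vecMulVec v v) := by
  have hv : ∀ i, v i ≠ 0 := fun i => by
    rcases eq_or_ne i 0 with rfl | hi
    exacts [hv0.ne, (hvi i hi).ne']
  refine ⟨⟨fun i => |v i|⁻¹, fun i => inv_pos.mpr (abs_pos.mpr (hv i)), ?_⟩,
    .of_posSemidef (by simpa using posSemidef_vecMulVec_self_star v)⟩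
  rw [diagonal_mul_vecMulVec_mul_diagonal, mul_comm v]
  apply mn_vecMulVec_self_of_neg_one_first
  · simp [abs_of_neg hv0, hv0.ne]
  · intro i hi
    simp [abs_of_pos (hvi i hi), hv i]
end

section
/- For n ≥ 4, let v = (−1, −1, 1, …, 1)^T ∈ ℝ^n. Then the positive semidefinite matrix A = vv^T is not an element of G_nℳ_n, i.e., there are no permutation matrix P and diagonal matrix D with positive diagonal such that (PD)^T A (PD) has off-diagonal entries nondecreasing in rows and columns. -/
open Matrix

/-!
After the congruence by `g = P D`, the matrix `v vᵀ` becomes `w wᵀ` with `w = gᵀ v`, a vector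
with two negative and at least two positive entries; so every row of `w wᵀ` has both a positive
and a negative off-diagonal entry. On the other hand, monotonicity of the off-diagonal entries
forces every matrix in `ℳ_n` to have a nonnegative last row (if its bottom-left entry is `≥ 0`)
or a negative first column (otherwise).
-/

theorem Mn.row_top_nonneg_or_col_bot_neg {n : ℕ} [NeZero n] {A : Matrix (Fin n) (Fin n) ℝ}
    (hA : Mn A) : (∀ j, j ≠ ⊤ → 0 ≤ A ⊤ j) ∨ ∀ i, i ≠ ⊥ → A i ⊥ < 0 := by
  by_cases h : 0 ≤ A ⊤ ⊥
  · refine Or.inl fun j hj => h.trans (hA ⊤ ⊥ ⊤ j le_rfl bot_le ?_ hj.symm)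
    exact (bot_le.trans_lt (lt_top_iff_ne_top.mpr hj)).ne'
  · refine Or.inr fun i hi => (hA i ⊥ ⊤ ⊥ le_top le_rfl hi ?_).trans_lt (not_le.mp h)
    exact ((bot_lt_iff_ne_bot.mpr hi).trans_le le_top).ne'

theorem vecMul_permMatrix_mul_diagonal {n R : Type*} [Fintype n] [DecidableEq n] [CommRing R]
    (σ : Equiv.Perm n) (v d : n → R) :
    v ᵥ* ((Matrix.of fun i j => if σ i = j then (1 : R) else 0) * diagonal d) =
      fun j => v (σ.symm j) * d j := by
  have hP : (Matrix.of fun i j => if σ i = j then (1 : R) else 0) = σ.permMatrix R := by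
    ext i j
    simp [Equiv.Perm.permMatrix, PEquiv.toMatrix_apply]
  ext j
  rw [hP, ← vecMul_vecMul, vecMul_permMatrix, vecMul_diagonal, Function.comp_apply]

theorem transpose_mul_vecMulVec_self_mul {m n R : Type*} [Fintype m] [CommSemiring R]
    (v : m → R) (g : Matrix m n R) : gᵀ * vecMulVec v v * g = vecMulVec (v ᵥ* g) (v ᵥ* g) := by
  rw [mul_vecMulVec, vecMulVec_mul, mulVec_transpose]

section SignPattern

variable {ι R : Type*} [Ring R] [LinearOrder R] [IsStrictOrderedRing R] {w : ι → R}

theorem exists_ne_mul_neg {a p : ι} (ha : w a < 0) (hp : 0 < w p) {i : ι} (hi : w i ≠ 0) :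
    ∃ j, j ≠ i ∧ w i * w j < 0 := by
  rcases hi.lt_or_gt with hi | hi
  · exact ⟨p, fun h => (h ▸ hi).not_gt hp, mul_neg_of_neg_of_pos hi hp⟩
  · exact ⟨a, fun h => (h ▸ hi).not_gt ha, mul_neg_of_pos_of_neg hi ha⟩

theorem exists_ne_mul_pos {a b p q : ι} (hab : a ≠ b) (ha : w a < 0) (hb : w b < 0)
    (hpq : p ≠ q) (hp : 0 < w p) (hq : 0 < w q) {i : ι} (hi : w i ≠ 0) :
    ∃ j, j ≠ i ∧ 0 < w i * w j := by
  rcases hi.lt_or_gt with hi | hi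
  · by_cases hai : a = i
    · exact ⟨b, fun h => hab (hai.trans h.symm), mul_pos_of_neg_of_neg hi hb⟩
    · exact ⟨a, hai, mul_pos_of_neg_of_neg hi ha⟩
  · by_cases hpi : p = i
    · exact ⟨q, fun h => hpq (hpi.trans h.symm), mul_pos hi hq⟩
    · exact ⟨p, hpi, mul_pos hi hp⟩

end SignPattern

theorem stmt_17 {n : ℕ} (hn : 4 ≤ n) (v : Fin n → ℝ)
    (hv : v = fun i : Fin n => if (i : ℕ) < 2 then (-1 : ℝ) else 1) :
    ¬ ∃ (σ : Equiv.Perm (Fin n)) (d : Fin n → ℝ), (∀ i, 0 < d i) ∧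
      Mn ((((Matrix.of fun i j => if σ i = j then (1 : ℝ) else 0) * Matrix.diagonal d)ᵀ *
            Matrix.vecMulVec v v) *
          ((Matrix.of fun i j => if σ i = j then (1 : ℝ) else 0) * Matrix.diagonal d)) := by
  rintro ⟨σ, d, hd, hM⟩
  have : NeZero n := ⟨by omega⟩
  rw [transpose_mul_vecMulVec_self_mul, vecMul_permMatrix_mul_diagonal] at hM
  set w : Fin n → ℝ := fun j => v (σ.symm j) * d j
  have hw_neg (k : Fin n) (hk : (k : ℕ) < 2) : w (σ k) < 0 := by
    simp only [w, hv, Equiv.symm_apply_apply, if_pos hk]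
    linarith [hd (σ k)]
  have hw_pos (k : Fin n) (hk : 2 ≤ (k : ℕ)) : 0 < w (σ k) := by
    simp only [w, hv, Equiv.symm_apply_apply, if_neg hk.not_gt, one_mul]
    exact hd (σ k)
  have hw_ne (j : Fin n) : w j ≠ 0 := by
    obtain ⟨k, rfl⟩ := σ.surjective j
    rcases lt_or_ge (k : ℕ) 2 with hk | hk
    exacts [(hw_neg k hk).ne, (hw_pos k hk).ne']
  let k : Fin 4 → Fin n := Fin.castLE hn
  have hk : Function.Injective (σ ∘ k) := σ.injective.comp (Fin.castLE_injective hn)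
  rcases hM.row_top_nonneg_or_col_bot_neg with hrow | hcol
  · obtain ⟨j, hj, hneg⟩ := exists_ne_mul_neg (hw_neg (k 0) (by simp [k]))
      (hw_pos (k 2) (by simp [k])) (hw_ne ⊤)
    exact hneg.not_ge (by simpa only [vecMulVec_apply] using hrow j hj)
  · obtain ⟨j, hj, hpos⟩ := exists_ne_mul_pos (hk.ne (by decide : (0 : Fin 4) ≠ 1))
      (hw_neg (k 0) (by simp [k])) (hw_neg (k 1) (by simp [k]))
      (hk.ne (by decide : (2 : Fin 4) ≠ 3))
      (hw_pos (k 2) (by simp [k])) (hw_pos (k 3) (by simp [k])) (hw_ne ⊥)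
    exact hpos.not_gt (by simpa only [vecMulVec_apply, mul_comm] using hcol j hj)
end

section
/- Let A be a symmetric n×n matrix and suppose there exists a vector d ∈ ℝ^n with d_i ≥ 1 for all i satisfying d_k a_{ik} − d_j a_{ij} ≥ 0 for all triples i, j, k with j < k, i ≠ j, i ≠ k. Then D = diag(d₁,…,d_n) satisfies DAD ∈ ℳ_n; conversely, if DAD ∈ ℳ_n for some diagonal D with positive diagonal, such a vector d exists. -/
open Matrix

/-!
For a symmetric `B`, membership in `ℳ_n` reduces to monotonicity of each row off the diagonal:
an arbitrary comparison `B i j ≤ B k l` is a chain of two row steps joined by symmetry. The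
`i`-th row of `DAD` is the vector `(d j * A i j)_j` scaled by `d i > 0`, so the condition on `d`
is exactly row monotonicity of `DAD`; and rescaling `d` by a positive constant makes `d ≥ 1`.
-/

theorem Matrix.diagonal_mul_mul_diagonal_apply {ι R : Type*} [Fintype ι] [DecidableEq ι]
    [CommSemiring R] (d : ι → R) (A : Matrix ι ι R) (i j : ι) :
    (diagonal d * A * diagonal d) i j = d i * (d j * A i j) := by
  simp only [mul_diagonal, diagonal_mul]
  ring

theorem Matrix.IsSymm.diagonal_mul_mul_diagonal {ι R : Type*} [Fintype ι] [DecidableEq ι]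
    [CommSemiring R] {A : Matrix ι ι R} (hA : A.IsSymm) (d : ι → R) :
    (diagonal d * A * diagonal d).IsSymm := by
  rw [IsSymm, transpose_mul, transpose_mul, diagonal_transpose, hA.eq, mul_assoc]

variable {n : ℕ}

theorem mn_iff_of_isSymm {B : Matrix (Fin n) (Fin n) ℝ} (hB : B.IsSymm) :
    Mn B ↔ ∀ i j k : Fin n, j < k → i ≠ j → i ≠ k → B i j ≤ B i k := by
  have hsymm : ∀ a b, B a b = B b a := fun a b => hB.apply b a
  constructor
  · exact fun hM i j k hjk hij hik => hM i j i k le_rfl hjk.le hij hik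
  intro hrow
  have hrow' : ∀ i j k : Fin n, j ≤ k → i ≠ j → i ≠ k → B i j ≤ B i k := by
    intro i j k hjk hij hik
    rcases hjk.eq_or_lt with rfl | hjk
    · exact le_rfl
    · exact hrow i j k hjk hij hik
  intro i j k l hik hjl hij hkl
  by_cases hil : i = l
  · -- the route through `B i l` would hit the diagonal; `j < i < k` gives another one
    subst hil
    have hji : j < i := lt_of_le_of_ne hjl (Ne.symm hij)
    have hik' : i < k := lt_of_le_of_ne hik (Ne.symm hkl)
    calc B i j = B j i := hsymm i j
      _ ≤ B j k := hrow j i k hik' (Ne.symm hij) (hji.trans hik').ne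
      _ = B k j := hsymm j k
      _ ≤ B k i := hrow' k j i hjl (hji.trans hik').ne' hkl
  · calc B i j ≤ B i l := hrow' i j l hjl hij hil
      _ = B l i := hsymm i l
      _ ≤ B l k := hrow' l i k hik (Ne.symm hil) (Ne.symm hkl)
      _ = B k l := hsymm l k

theorem mn_diagonal_mul_mul_diagonal_iff {A : Matrix (Fin n) (Fin n) ℝ} (hA : A.IsSymm)
    {d : Fin n → ℝ} (hd : ∀ i, 0 < d i) :
    Mn (diagonal d * A * diagonal d) ↔
      ∀ i j k : Fin n, j < k → i ≠ j → i ≠ k → d j * A i j ≤ d k * A i k := by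
  simp only [mn_iff_of_isSymm (hA.diagonal_mul_mul_diagonal d),
    diagonal_mul_mul_diagonal_apply, mul_le_mul_iff_right₀ (hd _)]

theorem exists_pos_forall_one_le_mul {ι : Type*} [Finite ι] {d : ι → ℝ} (hd : ∀ i, 0 < d i) :
    ∃ c > 0, ∀ i, 1 ≤ c * d i := by
  obtain ⟨c, hc⟩ := (Set.finite_range fun i => (d i)⁻¹).bddAbove
  refine ⟨max c 1, by positivity, fun i => ?_⟩
  calc (1 : ℝ) = (d i)⁻¹ * d i := (inv_mul_cancel₀ (hd i).ne').symm
    _ ≤ max c 1 * d i := by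
      gcongr
      · exact (hd i).le
      · exact (hc ⟨i, rfl⟩).trans (le_max_left c 1)

theorem stmt_18 {n : ℕ} (A : Matrix (Fin n) (Fin n) ℝ) (hA : A.IsSymm) :
    (∀ d : Fin n → ℝ, (∀ i, 1 ≤ d i) →
      (∀ i j k : Fin n, j < k → i ≠ j → i ≠ k → 0 ≤ d k * A i k - d j * A i j) →
      Mn (Matrix.diagonal d * A * Matrix.diagonal d)) ∧
    ((∃ d : Fin n → ℝ, (∀ i, 0 < d i) ∧ Mn (Matrix.diagonal d * A * Matrix.diagonal d)) →
      ∃ d : Fin n → ℝ, (∀ i, 1 ≤ d i) ∧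
        ∀ i j k : Fin n, j < k → i ≠ j → i ≠ k → 0 ≤ d k * A i k - d j * A i j) := by
  constructor
  · intro d hd hrow
    rw [mn_diagonal_mul_mul_diagonal_iff hA fun i => one_pos.trans_le (hd i)]
    exact fun i j k hjk hij hik => sub_nonneg.mp (hrow i j k hjk hij hik)
  · rintro ⟨d, hd, hM⟩
    obtain ⟨c, hc, hcd⟩ := exists_pos_forall_one_le_mul hd
    refine ⟨fun i => c * d i, hcd, fun i j k hjk hij hik => ?_⟩
    have hle := (mn_diagonal_mul_mul_diagonal_iff hA hd).mp hM i j k hjk hij hik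
    have hscaled := mul_le_mul_of_nonneg_left hle hc.le
    simp only [mul_assoc]
    linarith
end
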